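/- For an assignment element A = x_1 x_2 ⋯ x_n (x_i ∈ {q_i p_i, p_i q_i}) and a clause element z_j in Cl(ℝ^{n,n}), one has A(1 − z_j) = 0 if and only if A z_j = A, which holds if and only if every literal of z_j matches the corresponding factor of A. -/

import Mathlib

namespace Stmt6

open Matrix

variable {n : ℕ}

def flipb (i : Fin n) (b : Fin n → Bool) : Fin n → Bool := Function.update b i (!b i)

lemma flipb_apply_self (i : Fin n) (b) : flipb i b i = !b i := by
  simp [flipb]

lemma flipb_apply_ne (i j : Fin n) (hij : j ≠ i) (b) : flipb i b j = b j := by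
  simp [flipb, Function.update_of_ne hij]

lemma flipb_flipb (i : Fin n) (b) : flipb i (flipb i b) = b := by
  funext j
  rcases eq_or_ne j i with rfl | h
  · simp [flipb_apply_self]
  · simp [flipb_apply_ne _ _ h]

lemma flipb_comm (i j : Fin n) (b) : flipb i (flipb j b) = flipb j (flipb i b) := by
  rcases eq_or_ne i j with rfl | hij
  · rfl
  funext k
  rcases eq_or_ne k i with rfl | h1
  · simp [flipb_apply_self, flipb_apply_ne _ _ hij]
  rcases eq_or_ne k j with rfl | h2
  · simp [flipb_apply_self, flipb_apply_ne _ _ hij.symm]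
  · simp [flipb_apply_ne _ _ h1, flipb_apply_ne _ _ h2]

def Xm (i : Fin n) : Matrix (Fin n → Bool) (Fin n → Bool) ℝ :=
  fun b c => if c = flipb i b then 1 else 0

lemma diagonal_mul_Xm (g : (Fin n → Bool) → ℝ) (i : Fin n) :
    diagonal g * Xm i = Xm i * diagonal (fun b => g (flipb i b)) := by
  ext b c
  rw [Matrix.diagonal_mul, Matrix.mul_diagonal]
  rcases eq_or_ne c (flipb i b) with rfl | h
  · simp [Xm, flipb_flipb]
  · simp [Xm, h]

lemma Xm_mul_Xm (i j : Fin n) :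
    Xm i * Xm j = fun b c => if c = flipb j (flipb i b) then (1:ℝ) else 0 := by
  funext b c
  simp only [Xm, Matrix.mul_apply]
  rw [Finset.sum_eq_single (flipb i b)]
  · simp
  · intro x _ hx; simp [hx]
  · simp

lemma Xm_mul_Xm_comm (i j : Fin n) : Xm i * Xm j = Xm j * Xm i := by
  rw [Xm_mul_Xm, Xm_mul_Xm]
  funext b c
  rw [flipb_comm]

lemma Xm_mul_Xm_self (i : Fin n) : Xm i * Xm i = 1 := by
  rw [Xm_mul_Xm]
  funext b c
  rw [flipb_flipb]
  rcases eq_or_ne c b with rfl | h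
  · simp
  · rw [Matrix.one_apply_ne (Ne.symm h)]; simp [h]

/-- key product formula -/
lemma XD_mul_XD (i j : Fin n) (u v : (Fin n → Bool) → ℝ) :
    (Xm i * diagonal u) * (Xm j * diagonal v) =
      (Xm i * Xm j) * diagonal (fun b => u (flipb j b) * v b) := by
  rw [mul_assoc, ← mul_assoc (diagonal u), diagonal_mul_Xm, mul_assoc, diagonal_mul_diagonal, ← mul_assoc]

def sgn (i : Fin n) (b : Fin n → Bool) : ℝ :=
  ∏ j ∈ Finset.univ.filter (fun j => j < i), (if b j then -1 else 1)

lemma sgn_sq (i : Fin n) (b) : sgn i b * sgn i b = 1 := by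
  rw [sgn, ← Finset.prod_mul_distrib]
  apply Finset.prod_eq_one
  intro j _
  split_ifs <;> norm_num

lemma sgn_flipb (i j : Fin n) (b) :
    sgn i (flipb j b) = (if j < i then -1 else 1) * sgn i b := by
  by_cases h : j < i
  · simp only [h, if_true, sgn]
    rw [← Finset.mul_prod_erase _ _ (by simp [h] : j ∈ Finset.univ.filter (fun j => j < i)),
        ← Finset.mul_prod_erase _ (fun j' => if b j' then (-1:ℝ) else 1)
          (by simp [h] : j ∈ Finset.univ.filter (fun j => j < i))]
    rw [Finset.prod_congr rfl (fun x hx => by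
      rw [flipb_apply_ne _ _ (Finset.ne_of_mem_erase hx)])]
    rw [flipb_apply_self]
    cases b j <;> simp
  · simp only [h, if_false, one_mul, sgn]
    apply Finset.prod_congr rfl
    intro x hx
    rw [flipb_apply_ne]
    rintro rfl
    exact h (Finset.mem_filter.mp hx).2

/-- sign of bit i -/
def gb (i : Fin n) (b : Fin n → Bool) : ℝ := if b i then -1 else 1

lemma gb_sq (i : Fin n) (b) : gb i b * gb i b = 1 := by
  rw [gb]; split_ifs <;> norm_num

lemma gb_flipb (i j : Fin n) (b) :
    gb i (flipb j b) = (if j = i then -1 else 1) * gb i b := by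
  rcases eq_or_ne j i with rfl | h
  · simp only [gb, flipb_apply_self, if_pos rfl]
    cases b j <;> simp
  · simp [gb, flipb_apply_ne _ _ h.symm, h]

variable (n) in
def idx (k : Fin (2*n)) : Fin n := ⟨k.val / 2, by have := k.isLt; omega⟩

def wf (k : Fin (2*n)) (b : Fin n → Bool) : ℝ :=
  sgn (idx n k) b * (if k.val % 2 = 1 then gb (idx n k) b else 1)

def Mk (k : Fin (2*n)) : Matrix (Fin n → Bool) (Fin n → Bool) ℝ :=
  Xm (idx n k) * diagonal (wf k)

lemma wf_flipb (k : Fin (2*n)) (j : Fin n) (b) :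
    wf k (flipb j b) =
      ((if j < idx n k then (-1:ℝ) else 1) *
        (if k.val % 2 = 1 ∧ j = idx n k then -1 else 1)) * wf k b := by
  unfold wf
  rw [sgn_flipb, gb_flipb]
  by_cases hk : k.val % 2 = 1 <;> by_cases hj : j = idx n k <;>
    simp [hk, hj]

lemma wf_sq (k : Fin (2*n)) (b) :
    wf k b * wf k b = 1 := by
  unfold wf
  by_cases hk : k.val % 2 = 1
  · simp only [hk, if_pos]
    have h1 := sgn_sq (idx n k) b
    have h2 := gb_sq (idx n k) b
    linear_combination gb (idx n k) b * gb (idx n k) b * h1 + h2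
  · simp only [hk, if_neg, mul_one, if_false]
    exact sgn_sq _ _

lemma neg_one_pow_mod (k : ℕ) : ((-1:ℝ))^k = if k % 2 = 1 then -1 else 1 := by
  conv_lhs => rw [← Nat.div_add_mod k 2]
  rw [pow_add, pow_mul]
  norm_num
  by_cases h : k % 2 = 1
  · rw [h, if_pos rfl]; norm_num
  · have : k % 2 = 0 := by omega
    rw [this, if_neg (by omega)]; norm_num

lemma Mk_mul_Mk_self (k : Fin (2*n)) : Mk k * Mk k = ((-1:ℝ)^(k:ℕ)) • 1 := by
  unfold Mk
  rw [XD_mul_XD, Xm_mul_Xm_self, one_mul, Matrix.smul_one_eq_diagonal]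
  have key : (fun b => wf k (flipb (idx n k) b) * wf k b)
      = fun _ => ((-1:ℝ)^(k:ℕ)) := by
    funext b
    rw [wf_flipb, mul_assoc, wf_sq, neg_one_pow_mod]
    simp only [lt_irrefl, if_false, and_true, mul_one]
    split_ifs <;> ring
  rw [key]

lemma Mk_anticomm (k l : Fin (2*n)) (hkl : k ≠ l) : Mk k * Mk l + Mk l * Mk k = 0 := by
  unfold Mk
  rw [XD_mul_XD, XD_mul_XD, Xm_mul_Xm_comm (idx n l), ← mul_add, Matrix.diagonal_add]
  have key : (fun b => wf k (flipb (idx n l) b) * wf l b + wf l (flipb (idx n k) b) * wf k b)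
      = fun _ => (0:ℝ) := by
    funext b
    rw [wf_flipb, wf_flipb]
    have hne : k.val ≠ l.val := fun h => hkl (Fin.ext h)
    have h2k := k.isLt
    have h2l := l.isLt
    have hlt : ∀ i j : Fin (2*n), (idx n i < idx n j) ↔ i.val / 2 < j.val / 2 :=
      fun i j => Iff.rfl
    have heq : ∀ i j : Fin (2*n), (idx n i = idx n j) ↔ i.val / 2 = j.val / 2 :=
      fun i j => ⟨fun h => congrArg Fin.val h, fun h => Fin.ext h⟩
    simp only [hlt, heq]
    split_ifs <;> first | (exfalso; omega) | ring
  rw [key, Matrix.diagonal_zero, mul_zero]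

noncomputable def phi (n : ℕ) : (Fin (2*n) → ℝ) →ₗ[ℝ] Matrix (Fin n → Bool) (Fin n → Bool) ℝ :=
  (Pi.basisFun ℝ (Fin (2*n))).constr ℝ Mk

lemma phi_apply (m : Fin (2*n) → ℝ) : phi n m = ∑ k, m k • Mk k := by
  simp [phi, Module.Basis.constr_apply_fintype]

lemma phi_single (k : Fin (2*n)) : phi n (Pi.single k 1) = Mk k := by
  rw [phi_apply, Finset.sum_eq_single k]
  · simp
  · intro l _ hl; simp [Pi.single_apply, Ne.symm hl]
  · simp

lemma phi_sq (m : Fin (2*n) → ℝ) :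
    phi n m * phi n m
      = algebraMap ℝ _ (∑ k : Fin (2*n), (-1:ℝ)^(k:ℕ) * (m k * m k)) := by
  rw [Algebra.algebraMap_eq_smul_one]
  apply smul_right_injective (Matrix (Fin n → Bool) (Fin n → Bool) ℝ)
    (two_ne_zero (α := ℝ))
  have h1 : phi n m * phi n m = ∑ k, ∑ l, (m k * m l) • (Mk k * Mk l) := by
    rw [phi_apply, Finset.sum_mul_sum]
    congr 1; funext k; congr 1; funext l
    rw [smul_mul_smul_comm]
  have h2 : phi n m * phi n m = ∑ k, ∑ l, (m k * m l) • (Mk l * Mk k) := by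
    rw [h1, Finset.sum_comm]
    congr 1; funext k; congr 1; funext l
    rw [mul_comm (m l) (m k)]
  calc (2:ℝ) • (phi n m * phi n m)
      = (phi n m * phi n m) + (phi n m * phi n m) := two_smul ℝ _
    _ = (∑ k, ∑ l, (m k * m l) • (Mk k * Mk l))
          + (∑ k, ∑ l, (m k * m l) • (Mk l * Mk k)) := congrArg₂ (· + ·) h1 h2
    _ = ∑ k, ∑ l, (m k * m l) • (Mk k * Mk l + Mk l * Mk k) := by
        rw [← Finset.sum_add_distrib]
        congr 1; funext k
        rw [← Finset.sum_add_distrib]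
        congr 1; funext l
        rw [smul_add]
    _ = ∑ k, (m k * m k) • (Mk k * Mk k + Mk k * Mk k) := by
        congr 1; funext k
        rw [Finset.sum_eq_single k]
        · intro l _ hl
          rw [Mk_anticomm _ _ (Ne.symm hl), smul_zero]
        · intro h; exact absurd (Finset.mem_univ k) h
    _ = (2:ℝ) • ((∑ k : Fin (2*n), (-1:ℝ)^(k:ℕ) * (m k * m k)) • 1) := by
        rw [Finset.sum_smul, Finset.smul_sum]
        congr 1; funext k
        rw [Mk_mul_Mk_self, ← add_smul, smul_smul, smul_smul]
        congr 1
        ring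

section Cliff

variable {n : ℕ} {Q : QuadraticMap ℝ (Fin (2*n) → ℝ) ℝ}

lemma Q_single (hQ : Q = QuadraticMap.weightedSumSquares ℝ (fun i : Fin (2*n) => (-1:ℝ)^(i:ℕ)))
    (k : Fin (2*n)) : Q (Pi.single k 1) = (-1:ℝ)^(k:ℕ) := by
  subst hQ
  rw [QuadraticMap.weightedSumSquares_apply, Finset.sum_eq_single k]
  · simp
  · intro l _ hl; simp [Pi.single_apply, Ne.symm hl]
  · simp

lemma polar_single (hQ : Q = QuadraticMap.weightedSumSquares ℝ (fun i : Fin (2*n) => (-1:ℝ)^(i:ℕ)))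
    (k l : Fin (2*n)) (hkl : k ≠ l) :
    QuadraticMap.polar (⇑Q) (Pi.single k 1) (Pi.single l 1) = 0 := by
  subst hQ
  rw [QuadraticMap.polar, QuadraticMap.weightedSumSquares_apply,
    QuadraticMap.weightedSumSquares_apply, QuadraticMap.weightedSumSquares_apply,
    ← Finset.sum_sub_distrib, ← Finset.sum_sub_distrib]
  apply Finset.sum_eq_zero
  intro i _
  rcases eq_or_ne i k with rfl | hik
  · simp [Pi.single_apply, hkl, Ne.symm hkl]
  rcases eq_or_ne i l with rfl | hil
  · simp [Pi.single_apply, hik]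
  · simp [Pi.single_apply, hik, hil]

/-- the generators -/
noncomputable def uu (Q : QuadraticMap ℝ (Fin (2*n) → ℝ) ℝ) (k : Fin (2*n)) :
    CliffordAlgebra Q := CliffordAlgebra.ι Q (Pi.single k 1)

lemma uu_sq (hQ : Q = QuadraticMap.weightedSumSquares ℝ (fun i : Fin (2*n) => (-1:ℝ)^(i:ℕ)))
    (k : Fin (2*n)) : uu Q k * uu Q k = algebraMap ℝ _ ((-1:ℝ)^(k:ℕ)) := by
  rw [uu, CliffordAlgebra.ι_sq_scalar, Q_single hQ]

lemma uu_anti (hQ : Q = QuadraticMap.weightedSumSquares ℝ (fun i : Fin (2*n) => (-1:ℝ)^(i:ℕ)))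
    (k l : Fin (2*n)) (hkl : k ≠ l) : uu Q k * uu Q l = -(uu Q l * uu Q k) := by
  have h := CliffordAlgebra.ι_mul_ι_add_swap (Q := Q) (Pi.single k (1:ℝ)) (Pi.single l 1)
  rw [polar_single hQ k l hkl, map_zero] at h
  rw [uu, uu, eq_neg_iff_add_eq_zero]
  exact h


end Cliff

section Cliff2

variable {n : ℕ} {Q : QuadraticMap ℝ (Fin (2*n) → ℝ) ℝ}

theorem k0_lt (i : Fin n) : 2 * (i : ℕ) < 2 * n := by have := i.isLt; omega
theorem k1_lt (i : Fin n) : 2 * (i : ℕ) + 1 < 2 * n := by have := i.isLt; omega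

def k0 (n : ℕ) (i : Fin n) : Fin (2*n) := ⟨2*i, k0_lt i⟩
def k1 (n : ℕ) (i : Fin n) : Fin (2*n) := ⟨2*i+1, k1_lt i⟩

noncomputable def ww (Q : QuadraticMap ℝ (Fin (2*n) → ℝ) ℝ) (i : Fin n) :
    CliffordAlgebra Q := uu Q (k0 n i) * uu Q (k1 n i)

lemma mul_mul_comm_of_anti {A : Type*} [Ring A] {a b c d : A}
    (h1 : a*c = -(c*a)) (h2 : a*d = -(d*a)) (h3 : b*c = -(c*b)) (h4 : b*d = -(d*b)) :
    (a*b)*(c*d) = (c*d)*(a*b) := by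
  have e1 : (a*b)*(c*d) = a*(b*c)*d := by noncomm_ring
  rw [e1, h3]
  have e2 : a*(-(c*b))*d = -((a*c)*(b*d)) := by noncomm_ring
  rw [e2, h1, h4]
  have e3 : -((-(c*a))*(-(d*b))) = -(c*(a*d)*b) := by noncomm_ring
  rw [e3, h2]
  noncomm_ring

variable (hQ : Q = QuadraticMap.weightedSumSquares ℝ (fun i : Fin (2*n) => (-1:ℝ)^(i:ℕ)))
include hQ

lemma ww_sq (i : Fin n) : ww Q i * ww Q i = 1 := by
  have hfe : uu Q (k1 n i) * uu Q (k0 n i) = -(uu Q (k0 n i) * uu Q (k1 n i)) :=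
    uu_anti hQ _ _ (by intro h; have h2 := congrArg Fin.val h; simp only [k0, k1] at h2; omega)
  have he := uu_sq hQ (k0 n i)
  have hf := uu_sq hQ (k1 n i)
  have h0 : ((-1:ℝ))^((k0 n i : ℕ)) = 1 := by
    show ((-1:ℝ))^(2*(i:ℕ)) = 1
    rw [pow_mul]; norm_num
  have h1 : ((-1:ℝ))^((k1 n i : ℕ)) = -1 := by
    show ((-1:ℝ))^(2*(i:ℕ)+1) = -1
    rw [pow_succ, pow_mul]; norm_num
  rw [h0] at he
  rw [h1] at hf
  unfold ww
  have e1 : uu Q (k0 n i) * uu Q (k1 n i) * (uu Q (k0 n i) * uu Q (k1 n i))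
      = uu Q (k0 n i) * (uu Q (k1 n i) * uu Q (k0 n i)) * uu Q (k1 n i) := by noncomm_ring
  rw [e1, hfe]
  have e2 : uu Q (k0 n i) * -(uu Q (k0 n i) * uu Q (k1 n i)) * uu Q (k1 n i)
      = -((uu Q (k0 n i) * uu Q (k0 n i)) * (uu Q (k1 n i) * uu Q (k1 n i))) := by noncomm_ring
  rw [e2, he, hf]
  simp

lemma ww_comm {i j : Fin n} (hij : i ≠ j) : ww Q i * ww Q j = ww Q j * ww Q i := by
  have hval : (i:ℕ) ≠ (j:ℕ) := fun h => hij (Fin.ext h)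
  apply mul_mul_comm_of_anti <;>
    exact uu_anti hQ _ _ (by intro h; have h2 := congrArg Fin.val h; simp only [k0, k1] at h2; omega)

end Cliff2

section Cliff3

variable {n : ℕ} {Q : QuadraticMap ℝ (Fin (2*n) → ℝ) ℝ}

noncomputable def PP (Q : QuadraticMap ℝ (Fin (2*n) → ℝ) ℝ) (c : Bool) (i : Fin n) :
    CliffordAlgebra Q := (2:ℝ)⁻¹ • (1 + (if c then (1:ℝ) else -1) • ww Q i)

variable (hQ : Q = QuadraticMap.weightedSumSquares ℝ (fun i : Fin (2*n) => (-1:ℝ)^(i:ℕ)))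
include hQ

lemma PP_mul_PP_same (c : Bool) (i : Fin n) : PP Q c i * PP Q c i = PP Q c i := by
  unfold PP
  rw [smul_mul_smul_comm, mul_add, add_mul, add_mul, mul_one, one_mul,
    smul_mul_smul_comm, ww_sq hQ]
  simp only [mul_one, one_mul]
  cases c <;> · match_scalars <;> norm_num

lemma PP_mul_PP_ne {c c' : Bool} (h : c ≠ c') (i : Fin n) : PP Q c i * PP Q c' i = 0 := by
  unfold PP
  rw [smul_mul_smul_comm, mul_add, add_mul, add_mul, mul_one, one_mul,
    smul_mul_smul_comm, ww_sq hQ]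
  simp only [mul_one, one_mul]
  rcases c with _|_ <;> rcases c' with _|_
  · exact absurd rfl h
  · match_scalars <;> norm_num
  · match_scalars <;> norm_num
  · exact absurd rfl h

lemma PP_comm (c c' : Bool) {i j : Fin n} (hij : i ≠ j) :
    Commute (PP Q c i) (PP Q c' j) := by
  have h1 : Commute (ww Q i) (ww Q j) := ww_comm hQ hij
  unfold PP
  refine Commute.smul_right (Commute.smul_left ?_ _) _
  apply Commute.add_left
  · exact Commute.one_left _
  · apply Commute.add_right
    · exact Commute.one_right _
    · exact (h1.smul_left _).smul_right _

omit hQ in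
lemma pow_k0 (i : Fin n) : ((-1:ℝ))^((k0 n i : ℕ)) = 1 := by
  show ((-1:ℝ))^(2*(i:ℕ)) = 1
  rw [pow_mul]; norm_num

omit hQ in
lemma pow_k1 (i : Fin n) : ((-1:ℝ))^((k1 n i : ℕ)) = -1 := by
  show ((-1:ℝ))^(2*(i:ℕ)+1) = -1
  rw [pow_succ, pow_mul]; norm_num

lemma qp_form (i : Fin n) :
    ((2:ℝ)⁻¹ • (uu Q (k0 n i) - uu Q (k1 n i))) * ((2:ℝ)⁻¹ • (uu Q (k0 n i) + uu Q (k1 n i)))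
      = PP Q true i := by
  have hfe : uu Q (k1 n i) * uu Q (k0 n i) = -(uu Q (k0 n i) * uu Q (k1 n i)) :=
    uu_anti hQ _ _ (by intro h; have h2 := congrArg Fin.val h; simp only [k0, k1] at h2; omega)
  have he := uu_sq hQ (k0 n i)
  rw [pow_k0, _root_.map_one] at he
  have hf := uu_sq hQ (k1 n i)
  rw [pow_k1, _root_.map_neg, _root_.map_one] at hf
  unfold PP ww
  rw [smul_mul_smul_comm, mul_add, sub_mul, sub_mul, he, hf, hfe]
  simp only [if_true]
  match_scalars <;> norm_num

lemma pq_form (i : Fin n) :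
    ((2:ℝ)⁻¹ • (uu Q (k0 n i) + uu Q (k1 n i))) * ((2:ℝ)⁻¹ • (uu Q (k0 n i) - uu Q (k1 n i)))
      = PP Q false i := by
  have hfe : uu Q (k1 n i) * uu Q (k0 n i) = -(uu Q (k0 n i) * uu Q (k1 n i)) :=
    uu_anti hQ _ _ (by intro h; have h2 := congrArg Fin.val h; simp only [k0, k1] at h2; omega)
  have he := uu_sq hQ (k0 n i)
  rw [pow_k0, _root_.map_one] at he
  have hf := uu_sq hQ (k1 n i)
  rw [pow_k1, _root_.map_neg, _root_.map_one] at hf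
  unfold PP ww
  rw [smul_mul_smul_comm, mul_sub, add_mul, add_mul, he, hf, hfe]
  match_scalars <;> norm_num

end Cliff3

section Rep

variable {n : ℕ} {Q : QuadraticMap ℝ (Fin (2*n) → ℝ) ℝ}
variable (hQ : Q = QuadraticMap.weightedSumSquares ℝ (fun i : Fin (2*n) => (-1:ℝ)^(i:ℕ)))

noncomputable def rep (hQ : Q = QuadraticMap.weightedSumSquares ℝ (fun i : Fin (2*n) => (-1:ℝ)^(i:ℕ))) :
    CliffordAlgebra Q →ₐ[ℝ] Matrix (Fin n → Bool) (Fin n → Bool) ℝ :=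
  CliffordAlgebra.lift Q ⟨phi n, fun m => by
    rw [phi_sq, hQ]
    congr 1
    rw [QuadraticMap.weightedSumSquares_apply]
    exact (Finset.sum_congr rfl (fun k _ => smul_eq_mul ..)).symm⟩

lemma rep_uu (k : Fin (2*n)) : rep hQ (uu Q k) = Mk k := by
  rw [rep, uu, CliffordAlgebra.lift_ι_apply, phi_single]

lemma Mk_k0_mul_Mk_k1 (i : Fin n) :
    Mk (k0 n i) * Mk (k1 n i) = Matrix.diagonal (gb i) := by
  have hidx0 : idx n (k0 n i) = i := Fin.ext (by show 2*(i:ℕ)/2 = i; omega)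
  have hidx1 : idx n (k1 n i) = i := Fin.ext (by show (2*(i:ℕ)+1)/2 = i; omega)
  have h0 : ¬ (((k0 n i) : ℕ) % 2 = 1) := by
    show ¬ ((2*(i:ℕ)) % 2 = 1); omega
  have h1 : ((k1 n i) : ℕ) % 2 = 1 := by
    show (2*(i:ℕ)+1) % 2 = 1; omega
  unfold Mk
  rw [hidx0, hidx1, XD_mul_XD, Xm_mul_Xm_self, one_mul]
  refine congrArg Matrix.diagonal (funext fun b => ?_)
  unfold wf
  rw [hidx0, hidx1, if_neg h0, if_pos h1, mul_one, sgn_flipb, if_neg (lt_irrefl i), one_mul]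
  linear_combination (gb i b) * sgn_sq i b

lemma rep_ww (i : Fin n) : rep hQ (ww Q i) = Matrix.diagonal (gb i) := by
  rw [ww, _root_.map_mul, rep_uu, rep_uu, Mk_k0_mul_Mk_k1]

lemma rep_PP (c : Bool) (i : Fin n) :
    rep hQ (PP Q c i) = Matrix.diagonal (fun b => if b i = c then 0 else 1) := by
  rw [PP, _root_.map_smul, _root_.map_add, _root_.map_one, _root_.map_smul, rep_ww]
  ext b b'
  rcases eq_or_ne b b' with rfl | hbb
  · simp only [Matrix.smul_apply, Matrix.add_apply, Matrix.one_apply_eq,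
      Matrix.diagonal_apply_eq, gb, smul_eq_mul]
    rcases c with _|_ <;> rcases hb : b i <;> simp [hb] <;> norm_num
  · simp only [Matrix.smul_apply, Matrix.add_apply, Matrix.one_apply_ne hbb,
      Matrix.diagonal_apply_ne _ hbb, smul_eq_mul]
    simp

end Rep

section Lists

lemma list_prod_mul_list_prod {ι M : Type*} [Monoid M] (L : List ι) (f g : ι → M)
    (hnd : L.Nodup)
    (hc : ∀ i ∈ L, ∀ j ∈ L, i ≠ j → Commute (g i) (f j)) :
    (L.map f).prod * (L.map g).prod = (L.map fun i => f i * g i).prod := by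
  induction L with
  | nil => simp
  | cons a t ih =>
    simp only [List.map_cons, List.prod_cons]
    have hcomm : Commute (g a) ((t.map f).prod) := by
      apply Commute.list_prod_right
      intro x hx
      obtain ⟨j, hj, rfl⟩ := List.mem_map.mp hx
      exact hc a (by simp) j (by simp [hj]) (fun h => (List.nodup_cons.mp hnd).1 (h ▸ hj))
    calc f a * (t.map f).prod * (g a * (t.map g).prod)
        = f a * ((t.map f).prod * g a) * (t.map g).prod := by
          simp only [mul_assoc]
      _ = f a * (g a * (t.map f).prod) * (t.map g).prod := by rw [← hcomm.eq]
      _ = (f a * g a) * ((t.map f).prod * (t.map g).prod) := by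
          simp only [mul_assoc]
      _ = (f a * g a) * (t.map fun i => f i * g i).prod := by
          rw [ih (List.nodup_cons.mp hnd).2
            (fun i hi j hj hij => hc i (by simp [hi]) j (by simp [hj]) hij)]

lemma list_prod_diagonal {ι B : Type*} [DecidableEq B] [Fintype B] (L : List ι)
    (d : ι → B → ℝ) :
    (L.map fun i => Matrix.diagonal (d i)).prod
      = Matrix.diagonal (fun b => (L.map fun i => d i b).prod) := by
  induction L with
  | nil => simp
  | cons a t ih =>
    simp only [List.map_cons, List.prod_cons, ih, Matrix.diagonal_mul_diagonal]

end Lists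

end Stmt6


open Stmt6 in
/-- For an assignment element `A = ∏_i x_i` (with `x_i = q i p i` or `p i q i` according to
`a : Fin n → Bool`) and a clause element `z = ∏_{i ∈ J} y_i` in `Cl(ℝ^{n,n})`:
`A * (1 - z) = 0 ↔ A * z = A`, and this holds iff every literal of `z` matches the
corresponding factor of `A`, i.e. `a i = s i` for all `i ∈ J`. -/
theorem stmt6 (n : ℕ)
    (Q : QuadraticMap ℝ (Fin (2 * n) → ℝ) ℝ)
    (hQ : Q = QuadraticMap.weightedSumSquares ℝ (fun i : Fin (2 * n) => (-1 : ℝ) ^ (i : ℕ)))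
    (p q : Fin n → CliffordAlgebra Q)
    (hp : ∀ i : Fin n, p i = (2 : ℝ)⁻¹ •
      (CliffordAlgebra.ι Q (Pi.single ⟨2 * i, by have := i.isLt; omega⟩ 1) +
       CliffordAlgebra.ι Q (Pi.single ⟨2 * i + 1, by have := i.isLt; omega⟩ 1)))
    (hq : ∀ i : Fin n, q i = (2 : ℝ)⁻¹ •
      (CliffordAlgebra.ι Q (Pi.single ⟨2 * i, by have := i.isLt; omega⟩ 1) -
       CliffordAlgebra.ι Q (Pi.single ⟨2 * i + 1, by have := i.isLt; omega⟩ 1)))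
    (a : Fin n → Bool) (J : Finset (Fin n)) (s : Fin n → Bool)
    (A z : CliffordAlgebra Q)
    (hA : A = ((List.finRange n).map (fun i => if a i then q i * p i else p i * q i)).prod)
    (hzdef : z = ((List.finRange n).map (fun i =>
      if i ∈ J then (if s i then q i * p i else p i * q i) else 1)).prod) :
    (A * (1 - z) = 0 ↔ A * z = A) ∧
    (A * z = A ↔ ∀ i ∈ J, a i = s i) := by
  have hp' : ∀ i : Fin n, p i = (2:ℝ)⁻¹ • (uu Q (k0 n i) + uu Q (k1 n i)) := hp
  have hq' : ∀ i : Fin n, q i = (2:ℝ)⁻¹ • (uu Q (k0 n i) - uu Q (k1 n i)) := hq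
  have hfac : ∀ i : Fin n, (if a i then q i * p i else p i * q i) = PP Q (a i) i := by
    intro i
    cases ha : a i
    · rw [if_neg (by simp), hp' i, hq' i, pq_form hQ]
    · rw [if_pos rfl, hp' i, hq' i, qp_form hQ]
  have hfacs : ∀ c : Fin n → Bool, ∀ i : Fin n,
      (if c i then q i * p i else p i * q i) = PP Q (c i) i := by
    intro c i
    cases hc : c i
    · rw [if_neg (by simp), hp' i, hq' i, pq_form hQ]
    · rw [if_pos rfl, hp' i, hq' i, qp_form hQ]
  have hA' : A = ((List.finRange n).map (fun i => PP Q (a i) i)).prod := by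
    rw [hA]
    exact congrArg List.prod (List.map_congr_left (fun i _ => hfacs a i))
  have hz' : z = ((List.finRange n).map
      (fun i => if i ∈ J then PP Q (s i) i else 1)).prod := by
    rw [hzdef]
    refine congrArg List.prod (List.map_congr_left (fun i _ => ?_))
    by_cases hi : i ∈ J
    · rw [if_pos hi, if_pos hi, hfacs s i]
    · rw [if_neg hi, if_neg hi]
  have hAz : A * z = ((List.finRange n).map
      (fun i => PP Q (a i) i * (if i ∈ J then PP Q (s i) i else 1))).prod := by
    rw [hA', hz']
    refine list_prod_mul_list_prod _ _ _ (List.nodup_finRange n) ?_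
    intro i _ j _ hij
    by_cases hi : i ∈ J
    · rw [if_pos hi]; exact PP_comm hQ _ _ hij
    · rw [if_neg hi]; exact Commute.one_left _
  have main : A * z = A ↔ ∀ i ∈ J, a i = s i := by
    constructor
    · intro hAzA
      by_contra hcon
      push_neg at hcon
      obtain ⟨i0, hi0, hne⟩ := hcon
      have hzero : PP Q (a i0) i0 * (if i0 ∈ J then PP Q (s i0) i0 else 1) = 0 := by
        rw [if_pos hi0]
        exact PP_mul_PP_ne hQ hne i0
      have hAz0 : A * z = 0 := by
        rw [hAz]
        exact List.prod_eq_zero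
          (List.mem_map.mpr ⟨i0, List.mem_finRange i0, hzero⟩)
      have hA0 : A = 0 := by rw [← hAzA, hAz0]
      -- contradiction via the matrix representation
      have hrepA : rep hQ A
          = Matrix.diagonal (fun b => ((List.finRange n).map
              (fun i => if b i = a i then (0:ℝ) else 1)).prod) := by
        rw [hA', map_list_prod, List.map_map]
        rw [show (⇑(rep hQ)) ∘ (fun i => PP Q (a i) i)
            = fun i => Matrix.diagonal (fun b => if b i = a i then (0:ℝ) else 1) from
          funext fun i => rep_PP hQ (a i) i]
        rw [list_prod_diagonal]
      have hentry := congrFun (congrFun hrepA (fun i => !(a i))) (fun i => !(a i))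
      rw [hA0, _root_.map_zero] at hentry
      rw [Matrix.diagonal_apply_eq] at hentry
      have hone : ((List.finRange n).map
          (fun i => if (!(a i)) = a i then (0:ℝ) else 1)).prod = 1 := by
        apply List.prod_eq_one
        intro x hx
        obtain ⟨i, _, rfl⟩ := List.mem_map.mp hx
        rw [if_neg (by simp)]
      rw [hone] at hentry
      exact one_ne_zero hentry.symm
    · intro h
      rw [hAz, hA']
      refine congrArg List.prod (List.map_congr_left (fun i _ => ?_))
      by_cases hi : i ∈ J
      · rw [if_pos hi, ← h i hi]
        exact PP_mul_PP_same hQ (a i) i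
      · rw [if_neg hi, mul_one]
  refine ⟨?_, main⟩
  rw [mul_one_sub, sub_eq_zero]
  exact ⟨fun h => h.symm, fun h => h.symm⟩
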